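/- In the stated noisy measurement setting, if i is a leaf node for S(x), then for every α > 0 the phase displacement satisfies the tail bound Pr(Δθ_i > α·(πk/δ)·√(2(r·σ_z² + σ_e²))) ≤ 4·e^{−α²/2}. -/

import Mathlib

/-!
At a leaf node the noiseless measurement is `(A'x)_i = A'_{ij} x_j` for the single `j ∈ S(x)` met
by row `i`, so `‖(A'x)_i‖ ≥ δ/k`. The arc–chord inequality `|arg w| ≤ π ‖w - 1‖` applied to
`w = y_i / (A'x)_i` then gives `Δθ_i ≤ (πk/δ) ‖N‖` for the noise `N = y_i - (A'x)_i`. Both `Re N`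
and `Im N` are linear combinations of independent centred Gaussians in which at most `r` signal
coordinates, with coefficients of modulus at most one, enter, so each is sub-Gaussian with
variance proxy `r σ_z² + σ_e²`. A two-sided Chernoff bound for each part and a union bound give
`4 e^{-α²/2}`.
-/

open MeasureTheory ProbabilityTheory NNReal Real

namespace Complex

theorem abs_arg_le_pi_mul_norm_sub_one (w : ℂ) : |arg w| ≤ π * ‖w - 1‖ := by
  rcases eq_or_ne w 0 with rfl | hw
  · simp only [arg_zero, abs_zero]
    positivity
  set u := exp (I * arg w)
  have hchord : 2 / π * |arg w| ≤ ‖u - 1‖ := by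
    have hhalf : |arg w / 2| ≤ π / 2 := by
      rw [abs_div, abs_two]
      linarith [abs_arg_le_pi w]
    rw [norm_exp_I_mul_ofReal_sub_one, norm_mul, Real.norm_two, Real.norm_eq_abs]
    calc 2 / π * |arg w| = 2 * (2 / π * |arg w / 2|) := by rw [abs_div, abs_two]; ring
      _ ≤ 2 * |Real.sin (arg w / 2)| := by gcongr; exact mul_abs_le_abs_sin hhalf
  have hradial : ‖u - w‖ ≤ ‖w - 1‖ := by
    have hw' : w = ‖w‖ * u := by
      simp only [u, mul_comm I]; exact (norm_mul_exp_arg_mul_I w).symm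
    calc ‖u - w‖ = ‖((1 - ‖w‖ : ℝ) : ℂ) * u‖ := by congr 1; push_cast; linear_combination -hw'
      _ = |1 - ‖w‖| := by
          rw [norm_mul, norm_real, Real.norm_eq_abs, norm_exp_I_mul_ofReal, mul_one]
      _ ≤ ‖w - 1‖ := by simpa [abs_sub_comm] using abs_norm_sub_norm_le w 1
  have htri := norm_sub_le_norm_sub_add_norm_sub u w 1
  have hpi := Real.pi_pos
  calc |arg w| = π / 2 * (2 / π * |arg w|) := by field_simp
    _ ≤ π / 2 * (2 * ‖w - 1‖) := mul_le_mul_of_nonneg_left (by linarith) (by positivity)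
    _ = π * ‖w - 1‖ := by ring

theorem abs_arg_div_le {s : ℂ} (hs : s ≠ 0) (y : ℂ) : |arg (y / s)| ≤ π * ‖y - s‖ / ‖s‖ := by
  simpa [div_sub_one hs, norm_div, mul_div_assoc] using abs_arg_le_pi_mul_norm_sub_one (y / s)

theorem lt_norm_sub_of_lt_abs_arg_div {y s : ℂ} {ε t : ℝ} (hε : 0 < ε) (hs : ε ≤ ‖s‖)
    (h : π / ε * t < |arg (y / s)|) : t < ‖y - s‖ := by
  have hs0 : s ≠ 0 := norm_pos_iff.1 (hε.trans_le hs)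
  have := (h.trans_le (abs_arg_div_le hs0 y)).trans_le
    (div_le_div_of_nonneg_left (by positivity) hε hs)
  rw [div_mul_eq_mul_div, div_lt_div_iff_of_pos_right hε] at this
  exact lt_of_mul_lt_mul_left this Real.pi_pos.le

end Complex

theorem Matrix.mulVec_apply_eq_mul_of_forall {R m n : Type*} [NonUnitalNonAssocSemiring R]
    [Fintype n] (A : Matrix m n R) (v : n → R) (i : m) {j₀ : n}
    (hj₀ : ∀ j, v j ≠ 0 → A i j ≠ 0 → j = j₀) : A.mulVec v i = A i j₀ * v j₀ := by
  refine Finset.sum_eq_single j₀ (fun j _ hj ↦ ?_) (by simp)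
  by_cases hv : v j = 0
  · simp [hv]
  by_cases hA : A i j = 0
  · simp [hA]
  exact absurd (hj₀ j hv hA) hj

theorem sum_nnnorm_sq_mul_le_card_mul {ι : Type*} [Fintype ι] (a : ι → ℂ) (b : ι → ℝ)
    (v : ι → ℝ≥0) {σ : ℝ≥0} (hb : ∀ j, |b j| ≤ ‖a j‖) (ha : ∀ j, ‖a j‖ ≤ 1)
    (hv : ∀ j, v j ≤ σ) :
    ∑ j, ‖b j‖₊ ^ 2 * v j ≤ (Finset.univ.filter fun j ↦ a j ≠ 0).card * σ := by
  rw [Finset.card_filter, Nat.cast_sum, Finset.sum_mul]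
  refine Finset.sum_le_sum fun j _ ↦ ?_
  by_cases haj : a j = 0
  · have : b j = 0 := abs_nonpos_iff.1 (by simpa [haj] using hb j)
    simp [haj, this]
  · have hb1 : ‖b j‖₊ ^ 2 ≤ 1 :=
      pow_le_one₀ zero_le (by rw [← NNReal.coe_le_coe]; simpa using (hb j).trans (ha j))
    simpa [haj] using mul_le_mul' hb1 (hv j)

namespace ProbabilityTheory

lemma hasSubgaussianMGF_id_gaussianReal (v : ℝ≥0) :
    HasSubgaussianMGF id v (gaussianReal 0 v) where
  integrable_exp_mul := integrable_exp_mul_gaussianReal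
  mgf_le t := by simp [mgf_id_gaussianReal]

namespace HasSubgaussianMGF

variable {Ω Ω' : Type*} {mΩ : MeasurableSpace Ω} {mΩ' : MeasurableSpace Ω'} {μ : Measure Ω}
  {ν : Measure Ω'} {X : Ω → ℝ} {Y : Ω' → ℝ} {c cX cY : ℝ≥0}

lemma mono (h : HasSubgaussianMGF X c μ) {c' : ℝ≥0} (hc : c ≤ c') :
    HasSubgaussianMGF X c' μ where
  integrable_exp_mul := h.integrable_exp_mul
  mgf_le t := (h.mgf_le t).trans (exp_le_exp.2 (by gcongr))

lemma comp_fst [IsProbabilityMeasure ν] (h : HasSubgaussianMGF X c μ) :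
    HasSubgaussianMGF (fun ω ↦ X ω.1) c (μ.prod ν) :=
  .of_map measurable_fst.aemeasurable (by rwa [Measure.map_fst_prod, measure_univ, one_smul])

lemma comp_snd [IsProbabilityMeasure μ] [SFinite ν] (h : HasSubgaussianMGF Y c ν) :
    HasSubgaussianMGF (fun ω ↦ Y ω.2) c (μ.prod ν) :=
  .of_map measurable_snd.aemeasurable (by rwa [Measure.map_snd_prod, measure_univ, one_smul])

lemma prod_add [IsProbabilityMeasure μ] [IsProbabilityMeasure ν]
    (hX : HasSubgaussianMGF X cX μ) (hY : HasSubgaussianMGF Y cY ν) :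
    HasSubgaussianMGF (fun ω ↦ X ω.1 + Y ω.2) (cX + cY) (μ.prod ν) :=
  hX.comp_fst.add_of_indepFun hY.comp_snd (indepFun_prod₀ hX.aemeasurable hY.aemeasurable)

lemma pi_sum {ι : Type*} [Fintype ι] {Ω : ι → Type*} {mΩ : ∀ i, MeasurableSpace (Ω i)}
    {μ : ∀ i, Measure (Ω i)} [∀ i, IsProbabilityMeasure (μ i)] {X : ∀ i, Ω i → ℝ}
    {c : ι → ℝ≥0} (h : ∀ i, HasSubgaussianMGF (X i) (c i) (μ i)) :
    HasSubgaussianMGF (fun ω ↦ ∑ i, X i (ω i)) (∑ i, c i) (Measure.pi μ) :=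
  sum_of_iIndepFun (iIndepFun_pi fun i ↦ (h i).aemeasurable) fun i _ ↦
    .of_map (measurable_pi_apply i).aemeasurable
      (by rw [(measurePreserving_eval μ i).map_eq]; exact h i)

lemma measure_mul_sqrt_lt_abs_le (h : HasSubgaussianMGF X c μ) {α : ℝ} (hα : 0 < α) :
    μ {ω | α * √c < |X ω|} ≤ ENNReal.ofReal (2 * exp (-α ^ 2 / 2)) := by
  have : IsFiniteMeasure μ := by simpa [integrable_const_iff] using h.integrable_exp_mul 0
  rcases eq_zero_or_pos c with rfl | hc
  · refine le_of_eq_of_le (measure_mono_null (fun ω hω ↦ ?_)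
      (ae_eq_zero_of_hasSubgaussianMGF_zero h)) zero_le
    simp_all
  have htail {Y : Ω → ℝ} (hY : HasSubgaussianMGF Y c μ) :
      μ {ω | α * √c ≤ Y ω} ≤ ENNReal.ofReal (exp (-α ^ 2 / 2)) := by
    rw [← ofReal_measureReal]
    refine ENNReal.ofReal_le_ofReal ((hY.measure_ge_le (by positivity)).trans_eq ?_)
    rw [mul_pow, sq_sqrt c.coe_nonneg]
    field_simp
  calc μ {ω | α * √c < |X ω|}
      ≤ μ ({ω | α * √c ≤ X ω} ∪ {ω | α * √c ≤ (-X) ω}) := measure_mono fun ω hω ↦ by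
        rcases lt_abs.1 (show α * √c < |X ω| from hω) with h | h
        exacts [Or.inl h.le, Or.inr h.le]
    _ ≤ ENNReal.ofReal (exp (-α ^ 2 / 2)) + ENNReal.ofReal (exp (-α ^ 2 / 2)) :=
        (measure_union_le _ _).trans (add_le_add (htail h) (htail h.neg))
    _ = ENNReal.ofReal (2 * exp (-α ^ 2 / 2)) := by
        rw [← ENNReal.ofReal_add (by positivity) (by positivity), two_mul]

end HasSubgaussianMGF

lemma hasSubgaussianMGF_const_mul_gaussianReal (r : ℝ) (v : ℝ≥0) :
    HasSubgaussianMGF (fun x ↦ r * x) (‖r‖₊ ^ 2 * v) (gaussianReal 0 v) :=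
  ((hasSubgaussianMGF_id_gaussianReal v).const_mul r).mono (le_of_eq (by ext; simp; rfl))

lemma measure_mul_sqrt_two_mul_lt_norm_le {Ω : Type*} {mΩ : MeasurableSpace Ω} {μ : Measure Ω}
    {Z : Ω → ℂ} {c : ℝ≥0} (hre : HasSubgaussianMGF (fun ω ↦ (Z ω).re) c μ)
    (him : HasSubgaussianMGF (fun ω ↦ (Z ω).im) c μ) {α : ℝ} (hα : 0 < α) :
    μ {ω | α * √(2 * c) < ‖Z ω‖} ≤ ENNReal.ofReal (4 * exp (-α ^ 2 / 2)) := by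
  calc μ {ω | α * √(2 * c) < ‖Z ω‖}
      ≤ μ ({ω | α * √c < |(Z ω).re|} ∪ {ω | α * √c < |(Z ω).im|}) :=
        measure_mono fun ω hω ↦ by
          have hω : α * (√2 * √c) < ‖Z ω‖ := by rwa [← sqrt_mul zero_le_two]
          by_contra! hle
          simp only [Set.mem_union, Set.mem_ofPred_eq, not_or, not_lt] at hle
          have := (Complex.norm_le_sqrt_two_mul_max (Z ω)).trans
            (mul_le_mul_of_nonneg_left (max_le hle.1 hle.2) (sqrt_nonneg 2))
          linarith
    _ ≤ ENNReal.ofReal (2 * exp (-α ^ 2 / 2)) + ENNReal.ofReal (2 * exp (-α ^ 2 / 2)) :=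
        (measure_union_le _ _).trans
          (add_le_add (hre.measure_mul_sqrt_lt_abs_le hα) (him.measure_mul_sqrt_lt_abs_le hα))
    _ = ENNReal.ofReal (4 * exp (-α ^ 2 / 2)) := by
        rw [← ENNReal.ofReal_add (by positivity) (by positivity)]; ring_nf

section NoiseModel

variable {ι : Type*} [Fintype ι]

noncomputable abbrev noiseMeasure (v : ι → ℝ≥0) (w : ℝ≥0) : Measure ((ι → ℝ) × ℝ × ℝ) :=
  (Measure.pi fun j ↦ gaussianReal 0 (v j)).prod ((gaussianReal 0 w).prod (gaussianReal 0 w))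

/-- The noise `y_i - (A'x)_i = (A'z)_i + e_i` of a row `a` of `A'`, at `ω = (z, e_iᴿᵉ, e_iᴵᵐ)`. -/
def measurementNoise (a : ι → ℂ) (ω : (ι → ℝ) × ℝ × ℝ) : ℂ :=
  a ⬝ᵥ (fun j ↦ (ω.1 j : ℂ)) + (ω.2.1 + ω.2.2 * Complex.I)

lemma hasSubgaussianMGF_re_measurementNoise (a : ι → ℂ) (v : ι → ℝ≥0) (w : ℝ≥0) :
    HasSubgaussianMGF (fun ω ↦ (measurementNoise a ω).re)
      (∑ j, ‖(a j).re‖₊ ^ 2 * v j + w) (noiseMeasure v w) := by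
  have := (HasSubgaussianMGF.pi_sum fun j ↦
    hasSubgaussianMGF_const_mul_gaussianReal (a j).re (v j)).prod_add
    ((hasSubgaussianMGF_id_gaussianReal w).comp_fst (ν := gaussianReal 0 w))
  refine this.congr (ae_of_all _ fun ω ↦ ?_)
  simp [measurementNoise, dotProduct, Complex.re_sum]

lemma hasSubgaussianMGF_im_measurementNoise (a : ι → ℂ) (v : ι → ℝ≥0) (w : ℝ≥0) :
    HasSubgaussianMGF (fun ω ↦ (measurementNoise a ω).im)
      (∑ j, ‖(a j).im‖₊ ^ 2 * v j + w) (noiseMeasure v w) := by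
  have := (HasSubgaussianMGF.pi_sum fun j ↦
    hasSubgaussianMGF_const_mul_gaussianReal (a j).im (v j)).prod_add
    ((hasSubgaussianMGF_id_gaussianReal w).comp_snd (μ := gaussianReal 0 w))
  refine this.congr (ae_of_all _ fun ω ↦ ?_)
  simp [measurementNoise, dotProduct, Complex.im_sum]

end NoiseModel

end ProbabilityTheory

open MeasureTheory ProbabilityTheory NNReal in
theorem stmt10 {n m' : ℕ} (A' : Matrix (Fin m') (Fin n) ℂ)
    (x : Fin n → ℝ) (δ k : ℝ) (hδ : 0 < δ) (hk : 1 ≤ k)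
    (σz σe : ℝ≥0) (r : ℕ)
    (hA : ∀ i j, A' i j = 0 ∨ ‖A' i j‖ = 1)
    (i : Fin m')
    (hrow : ((Finset.univ : Finset (Fin n)).filter (fun j => A' i j ≠ 0)).card ≤ r)
    (hx : ∀ j, x j ≠ 0 → δ / k ≤ |x j|)
    (hleaf : ∃! j : Fin n, x j ≠ 0 ∧ A' i j ≠ 0) :
    ∀ α : ℝ, 0 < α →
      ((Measure.pi fun j : Fin n =>
            gaussianReal 0 (if x j = 0 then σz ^ 2 else 0)).prod
          ((gaussianReal 0 (σe ^ 2)).prod (gaussianReal 0 (σe ^ 2))))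
        {ω : (Fin n → ℝ) × ℝ × ℝ |
          α * (Real.pi * k / δ * Real.sqrt (2 * ((r : ℝ) * (σz : ℝ) ^ 2 + (σe : ℝ) ^ 2)))
            < |Complex.arg
                ((A'.mulVec (fun j => ((x j + ω.1 j : ℝ) : ℂ)) i
                    + ((ω.2.1 : ℂ) + (ω.2.2 : ℂ) * Complex.I))
                  / A'.mulVec (fun j => ((x j : ℝ) : ℂ)) i)|}
        ≤ ENNReal.ofReal (4 * Real.exp (-α ^ 2 / 2)) := by
  intro α hα
  obtain ⟨j₀, ⟨hxj₀, hAj₀⟩, huniq⟩ := hleaf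
  set s := A'.mulVec (fun j => ((x j : ℝ) : ℂ)) i
  have hs_leaf : s = A' i j₀ * x j₀ := Matrix.mulVec_apply_eq_mul_of_forall _ _ _
    fun j hxj hAj ↦ huniq j ⟨Complex.ofReal_ne_zero.1 hxj, hAj⟩
  have hs : δ / k ≤ ‖s‖ := by
    simpa [hs_leaf, (hA i j₀).resolve_left hAj₀] using hx j₀ hxj₀
  set V : ℝ≥0 := r * σz ^ 2 + σe ^ 2
  have hV : ∀ b : Fin n → ℝ, (∀ j, |b j| ≤ ‖A' i j‖) →
      ∑ j, ‖b j‖₊ ^ 2 * (if x j = 0 then σz ^ 2 else 0) + σe ^ 2 ≤ V := by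
    intro b hb
    have hrow_norm (j : Fin n) : ‖A' i j‖ ≤ 1 :=
      (hA i j).elim (fun h ↦ by rw [h, norm_zero]; exact zero_le_one) le_of_eq
    have hvar (j : Fin n) : (if x j = 0 then σz ^ 2 else 0) ≤ σz ^ 2 := by
      by_cases hxj : x j = 0 <;> simp [hxj]
    grw [sum_nnnorm_sq_mul_le_card_mul (A' i) b _ hb hrow_norm hvar, hrow]
  have hnoise (ω : (Fin n → ℝ) × ℝ × ℝ) : measurementNoise (A' i) ω =
      A'.mulVec (fun j => ((x j + ω.1 j : ℝ) : ℂ)) i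
        + ((ω.2.1 : ℂ) + (ω.2.2 : ℂ) * Complex.I) - s := by
    simp only [s, measurementNoise, Matrix.mulVec, dotProduct, Complex.ofReal_add, mul_add,
      Finset.sum_add_distrib]
    ring
  refine (measure_mono fun ω hω ↦ ?_).trans (measure_mul_sqrt_two_mul_lt_norm_le
    ((hasSubgaussianMGF_re_measurementNoise _ _ _).mono (hV _ fun _ ↦ Complex.abs_re_le_norm _))
    ((hasSubgaussianMGF_im_measurementNoise _ _ _).mono (hV _ fun _ ↦ Complex.abs_im_le_norm _))
    hα)
  rw [Set.mem_ofPred_eq, hnoise]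
  refine Complex.lt_norm_sub_of_lt_abs_arg_div (div_pos hδ (by linarith)) hs
    (lt_of_eq_of_lt ?_ hω)
  simp only [V, NNReal.coe_add, NNReal.coe_mul, NNReal.coe_natCast, NNReal.coe_pow]
  field_simp
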